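/- Consider the stochastic volatility model X_i = σ_i Y_i, where (σ_i) is a stationary sequence with P(a ≤ σ₁ ≤ b)=1 for constants 0<a<1<b, and (Y_i) is an iid sequence independent of (σ_i) with distribution F_Y(x)=1−exp(−S_Y(x)) such that F_Y∈MDA(Λ)∩𝒮 with tail-balance condition, and S_Y satisfies the Bojanic–Seneta condition (x S_Y′(x)/S_Y(x))·log S_Y(x)→0. Assume the distribution F of X is subexponential; then S(x)=−log F̄(x)=S_Y(x)(1+o(1)), and with g(x)=x/S(x) (assumed increasing), for every ε>0 and h=1,…,m, P(|X_0|>εg(x), |X_h|>εx)/F̄(x) ≤ exp(−S_Y(x)(1+o(1))) → 0 as x→∞, so condition C3 holds ((σ_i) being m-dependent makes (X_i) m-dependent). -/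

import Mathlib

/-!
Since `a ≤ σᵢ ≤ b`, the tail of `X₀ = σ₀ Y₀` is squeezed: `F̄_Y(x/a) ≤ F̄(x) ≤ F̄_Y(x/b)`.
The Bojanic–Seneta condition says that `x ((log S_Y)²)'(x) → 0`, so `(log S_Y)²` changes by at
most `η |log u - log x|` between `x` and `u`; when `c x / S_Y(x) ≤ u ≤ c' x` this distance is
`O(log S_Y(x))`, hence `log S_Y(u) - log S_Y(x) → 0`, i.e. `S_Y(u) ∼ S_Y(x)`. This gives
`S ∼ S_Y`. For C3, independence of `Y₀` and `Y_h` and the tail balance bound the joint probability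
by `C² F̄_Y(ε g(x)/b) F̄_Y(ε x/b)`; both arguments are admissible `u`'s, so dividing by
`F̄(x) ≥ F̄_Y(x/a)` leaves `exp(-S_Y(x)(1 + 1 - 1 + o(1)))`. The `m`-dependence of `X` comes from
that of `σ`, the independence of the `Yᵢ`, and the independence of `σ` from `Y`.
-/

open MeasureTheory ProbabilityTheory Filter Set Asymptotics
open scoped ENNReal NNReal Topology

namespace PLD

variable {Ω : Type*} [MeasureSpace Ω]

/-- Probability of an event, as a real number. -/
noncomputable def pr (A : Set Ω) : ℝ := (ℙ A).toReal

/-- The tail `P(X > x)` of a real random variable. -/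
noncomputable def tail (X : Ω → ℝ) (x : ℝ) : ℝ := pr {ω | x < X ω}

/-- The two-sided tail `P(|X| > x)`. -/
noncomputable def atail (X : Ω → ℝ) (x : ℝ) : ℝ := pr {ω | x < |X ω|}

/-- The tail of a measure on `ℝ`. -/
noncomputable def mtail (μ : Measure ℝ) (x : ℝ) : ℝ := (μ (Set.Ioi x)).toReal

/-- Partial sums `X_0 + ⋯ + X_{n-1}`. -/
def psum (X : ℕ → Ω → ℝ) (n : ℕ) (ω : Ω) : ℝ := ∑ i ∈ Finset.range n, X i ω

/-- A function is slowly varying at infinity. -/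
def SlowlyVarying (L : ℝ → ℝ) : Prop :=
  ∀ c : ℝ, 0 < c → Tendsto (fun x => L (c * x) / L x) atTop (𝓝 1)

/-- A function is regularly varying of index `ρ` at infinity. -/
def RegularlyVaryingFun (f : ℝ → ℝ) (ρ : ℝ) : Prop :=
  ∀ c : ℝ, 0 < c → Tendsto (fun x => f (c * x) / f x) atTop (𝓝 (c ^ ρ))

/-- The right tail of `X` is regularly varying with index `α`:
`P(X > x) = L(x) x^{-α}` for a slowly varying `L`. -/
def RegVaryingTail (X : Ω → ℝ) (α : ℝ) : Prop :=
  ∃ L : ℝ → ℝ, SlowlyVarying L ∧ ∀ᶠ x in atTop, tail X x = L x * x ^ (-α)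

/-- Tail balance condition with constants `pp > 0`, `pm ≥ 0`, `pp + pm = 1`. -/
structure TailBalance (X : Ω → ℝ) (pp pm : ℝ) : Prop where
  pos : 0 < pp
  nonneg : 0 ≤ pm
  sum_eq_one : pp + pm = 1
  plus : Tendsto (fun x => tail X x / atail X x) atTop (𝓝 pp)
  minus : Tendsto (fun x => tail (fun ω => -X ω) x / atail X x) atTop (𝓝 pm)

/-- `n`-fold convolution power of a measure on `ℝ` (law of the sum of `n` iid copies). -/
noncomputable def convPow (μ : Measure ℝ) : ℕ → Measure ℝ
  | 0 => Measure.dirac 0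
  | n + 1 => Measure.map (fun p : ℝ × ℝ => p.1 + p.2) ((convPow μ n).prod μ)

/-- A distribution concentrated on `[0,∞)` is subexponential:
`P(S_n > x) ∼ n P(X > x)` as `x → ∞` for every `n ≥ 2`. -/
def SubexponentialMeasure (μ : Measure ℝ) : Prop :=
  μ (Set.Iio 0) = 0 ∧
  ∀ n : ℕ, 2 ≤ n →
    Tendsto (fun x => mtail (convPow μ n) x / mtail μ x) atTop (𝓝 (n : ℝ))

/-- Two-sided subexponential class `𝒮`: the positive part `X⁺` has a subexponential
distribution and the tail balance condition holds. -/
def ClassS (X : Ω → ℝ) (pp pm : ℝ) : Prop :=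
  SubexponentialMeasure (Measure.map (fun ω => max (X ω) 0) ℙ) ∧ TailBalance X pp pm

/-- `a` is an auxiliary function for the (tail-) function `T` in the Gumbel MDA sense:
`T(x + y a(x))/T(x) → e^{-y}`. -/
def IsAuxiliary (T : ℝ → ℝ) (a : ℝ → ℝ) : Prop :=
  (∀ᶠ x in atTop, 0 < a x) ∧
  ∀ y : ℝ, Tendsto (fun x => T (x + y * a x) / T x) atTop (𝓝 (Real.exp (-y)))

/-- `F ∈ MDA(Λ)` (Gumbel maximum domain of attraction, infinite right endpoint),
via the Pickands–Balkema–de Haan characterization. -/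
def GumbelMDA (X : Ω → ℝ) : Prop := ∃ a : ℝ → ℝ, IsAuxiliary (tail X) a

/-- Class `LN`: subexponential distributions with `F̄(x) = exp(-S(x))`, `S` slowly
varying and `S(x)/log x → ∞`. -/
structure ClassLN (X : Ω → ℝ) (S : ℝ → ℝ) (pp pm : ℝ) : Prop where
  classS : ClassS X pp pm
  tail_eq : ∀ᶠ x in atTop, tail X x = Real.exp (-S x)
  slow : SlowlyVarying S
  heavy : Tendsto (fun x => S x / Real.log x) atTop atTop

/-- Strict stationarity of a sequence of random variables. -/
def Stationary (X : ℕ → Ω → ℝ) : Prop :=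
  ∀ (k n : ℕ),
    Measure.map (fun ω => fun i : Fin n => X (k + i) ω) ℙ
      = Measure.map (fun ω => fun i : Fin n => X i ω) ℙ

/-- `m`-dependence: the σ-fields generated by `(X_s, s ≤ t)` and `(X_s, s ≥ t+h)`
are independent whenever `h > m`. -/
def MDep (X : ℕ → Ω → ℝ) (m : ℕ) : Prop :=
  ∀ t h : ℕ, m < h →
    Indep (⨆ s ∈ Set.Iic t, MeasurableSpace.comap (X s) inferInstance)
          (⨆ s ∈ Set.Ici (t + h), MeasurableSpace.comap (X s) inferInstance) ℙ

/-- `sup_{x > u_n} |f_n(x)| → 0` as `n → ∞`. -/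
def UnifSmall (u : ℕ → ℝ) (f : ℕ → ℝ → ℝ) : Prop :=
  ∀ ε : ℝ, 0 < ε → ∀ᶠ n in atTop, ∀ x : ℝ, u n < x → |f n x| < ε

/-- An iid sequence (indexed by `ℕ`). -/
def IID (Z : ℕ → Ω → ℝ) : Prop :=
  iIndepFun Z ℙ ∧
  ∀ j, Measure.map (Z j) ℙ = Measure.map (Z 0) ℙ

/-- An iid sequence indexed by `ℤ`. -/
def IIDZ (Z : ℤ → Ω → ℝ) : Prop :=
  iIndepFun Z ℙ ∧
  ∀ j, Measure.map (Z j) ℙ = Measure.map (Z 0) ℙ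

/-- Condition (C) of Mikosch–Rodionov for the sequence `X` with hazard function `S`,
threshold function `g` and separating sequence `t`. -/
structure CondC (X : ℕ → Ω → ℝ) (m : ℕ) (S g : ℝ → ℝ) (t : ℕ → ℝ) : Prop where
  /- C1 -/
  g_mono : ∃ x₀ : ℝ, MonotoneOn g (Set.Ici x₀)
  g_tendsto : Tendsto g atTop atTop
  g_le : ∃ C : ℝ, 0 < C ∧ ∀ᶠ x in atTop, g x ≤ C * x / S x
  /- C2 -/
  t_tendsto : Tendsto t atTop atTop
  S_unif : ∀ δ : ℝ, 0 < δ →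
    UnifSmall (fun n => t n * δ) (fun _ x => S x / S (g x) - 1)
  g_sqrt : Tendsto (fun n => g (t n) / Real.sqrt n) atTop atTop
  iid_ld : ∀ δ : ℝ, 0 < δ → UnifSmall (fun n => t n * δ)
    (fun n x => mtail (convPow (Measure.map (X 0) ℙ) n) x / (n * tail (X 0) x) - 1)
  /- C3 -/
  mdep : MDep X m
  anti : ∀ ε : ℝ, 0 < ε → ∀ h : ℕ, 1 ≤ h → h ≤ m →
    Tendsto (fun x => pr {ω | ε * g x < |X 0 ω| ∧ ε * x < |X h ω|} / tail (X 0) x)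
      atTop (𝓝 0)

/-- Condition (RV) of Mikosch–Rodionov. -/
structure CondRV (X : ℕ → Ω → ℝ) (m : ℕ) (α : ℝ) (pp pm : ℝ) (t : ℕ → ℝ) : Prop where
  /- RV1 -/
  t_growth : Tendsto (fun n : ℕ => t n / Real.sqrt (n * Real.log n)) atTop atTop
  /- RV2 -/
  alpha_gt_two : 2 < α
  rv : RegVaryingTail (X 0) α
  balance : TailBalance (X 0) pp pm
  /- RV3 -/
  mdep : MDep X m
  anti : ∀ h : ℕ, 1 ≤ h → h ≤ m →
    Tendsto (fun x => pr {ω | x < |X h ω| ∧ x < |X 0 ω|} / tail (X 0) x) atTop (𝓝 0)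

/-- A (mean-zero or general) Gaussian process: all finite linear combinations
are one-dimensional Gaussian. -/
def GaussianProcess (Y : ℕ → Ω → ℝ) : Prop :=
  ∀ (s : Finset ℕ) (c : ℕ → ℝ), ∃ (mu : ℝ) (v : ℝ≥0),
    Measure.map (fun ω => ∑ i ∈ s, c i * Y i ω) ℙ = gaussianReal mu v

/-- Entries of the sample covariance matrix: `S_{ij}^{(n)} = ∑_{t<n} X_{it} X_{jt}`. -/
def sij (X : ℕ → ℕ → Ω → ℝ) (i j n : ℕ) (ω : Ω) : ℝ :=
  ∑ t ∈ Finset.range n, X i t ω * X j t ω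

/-- `max_{i ≤ p} (S_{ii}^{(n)} - n e)`. -/
noncomputable def diagMax (X : ℕ → ℕ → Ω → ℝ) (p n : ℕ) (e : ℝ) (ω : Ω) : ℝ :=
  ⨆ i : Fin p, (sij X i i n ω - n * e)

/-- `max_{1 ≤ i < j ≤ p} |S_{ij}^{(n)} - n e|`. -/
noncomputable def offMaxAbs (X : ℕ → ℕ → Ω → ℝ) (p n : ℕ) (e : ℝ) (ω : Ω) : ℝ :=
  ⨆ q : {q : Fin p × Fin p // q.1 < q.2}, |sij X q.1.1 q.1.2 n ω - n * e|

/-- `max_{1 ≤ i < j ≤ p} (S_{ij}^{(n)} - n e)`. -/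
noncomputable def offMax (X : ℕ → ℕ → Ω → ℝ) (p n : ℕ) (e : ℝ) (ω : Ω) : ℝ :=
  ⨆ q : {q : Fin p × Fin p // q.1 < q.2}, (sij X q.1.1 q.1.2 n ω - n * e)

/-- The rows `(X_{i·})` of the field are iid sequences. -/
def RowsIID (X : ℕ → ℕ → Ω → ℝ) : Prop :=
  iIndepFun
    (fun i ω => fun t => X i t ω) ℙ ∧
  ∀ i, Measure.map (fun ω => fun t => X i t ω) ℙ
      = Measure.map (fun ω => fun t => X 0 t ω) ℙ


def BojanicSeneta (S : ℝ → ℝ) : Prop :=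
  Tendsto (fun x => x * deriv S x / S x * Real.log (S x)) atTop (𝓝 0)

/-- A derivative bound `|F'(t)| ≤ η / t` makes `F ∘ exp` `η`-Lipschitz. -/
lemma abs_sub_le_mul_abs_log_sub_log {F F' : ℝ → ℝ} {x₀ η : ℝ} (hx₀ : 0 < x₀)
    (hF : ∀ t, x₀ ≤ t → HasDerivAt F (F' t) t) (hF' : ∀ t, x₀ ≤ t → |F' t| ≤ η / t)
    {s t : ℝ} (hs : x₀ ≤ s) (ht : x₀ ≤ t) :
    |F t - F s| ≤ η * |Real.log t - Real.log s| := by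
  have hmem : ∀ {r}, x₀ ≤ r → Real.log r ∈ Ici (Real.log x₀) := fun hr =>
    Real.log_le_log hx₀ hr
  have hexp : ∀ v ∈ Ici (Real.log x₀), x₀ ≤ Real.exp v := fun v hv =>
    (Real.log_le_iff_le_exp hx₀).mp hv
  have key := (convex_Ici (Real.log x₀)).norm_image_sub_le_of_norm_hasDerivWithin_le
    (f := F ∘ Real.exp) (f' := fun v => F' (Real.exp v) * Real.exp v) (C := η) ?_ ?_
    (hmem hs) (hmem ht)
  · simpa [Real.exp_log (hx₀.trans_le hs), Real.exp_log (hx₀.trans_le ht)] using key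
  · intro v hv
    exact ((hF _ (hexp v hv)).comp v (Real.hasDerivAt_exp v)).hasDerivWithinAt
  · intro v hv
    rw [Real.norm_eq_abs, abs_mul, Real.abs_exp, ← le_div_iff₀ (Real.exp_pos v)]
    exact hF' _ (hexp v hv)

namespace BojanicSeneta

lemma exists_abs_log_sub_mul_le {S : ℝ → ℝ} (hBS : BojanicSeneta S)
    (hdiff : Differentiable ℝ S) (htop : Tendsto S atTop atTop) {η : ℝ} (hη : 0 < η) :
    ∃ x₀, 0 < x₀ ∧ ∀ s t, x₀ ≤ s → x₀ ≤ t → 1 ≤ Real.log (S s) ∧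
      |Real.log (S t) - Real.log (S s)| * (Real.log (S t) + Real.log (S s)) ≤
        η * |Real.log t - Real.log s| := by
  set ψ : ℝ → ℝ := fun x => Real.log (S x)
  have hψtop : Tendsto ψ atTop atTop := Real.tendsto_log_atTop.comp htop
  obtain ⟨x₀, hx₀⟩ := eventually_atTop.mp
    ((hψtop.eventually_ge_atTop 1).and
      ((htop.eventually_gt_atTop 0).and
        ((hBS.eventually (Metric.closedBall_mem_nhds 0 (half_pos hη))).and
          (eventually_gt_atTop 0))))
  have hx₀pos : 0 < x₀ := (hx₀ x₀ le_rfl).2.2.2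
  -- `ψ²` has derivative `2 ψ ψ'`, which the condition bounds by `η / t`
  have hψ : ∀ t, x₀ ≤ t → HasDerivAt ψ (deriv S t / S t) t := fun t ht =>
    (hdiff t).hasDerivAt.log (hx₀ t ht).2.1.ne'
  have hderiv_sq : ∀ t, x₀ ≤ t →
      |deriv S t / S t * ψ t + ψ t * (deriv S t / S t)| ≤ η / t := by
    intro t ht
    obtain ⟨-, -, hBSt, htpos⟩ := hx₀ t ht
    rw [dist_zero_right, Real.norm_eq_abs] at hBSt
    rw [le_div_iff₀ htpos, ← abs_of_pos htpos, ← abs_mul, abs_of_pos htpos]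
    calc |(deriv S t / S t * ψ t + ψ t * (deriv S t / S t)) * t|
        = 2 * |t * deriv S t / S t * Real.log (S t)| := by
          rw [← abs_two, ← abs_mul]; simp only [ψ]; ring_nf
      _ ≤ η := by linarith
  refine ⟨x₀, hx₀pos, fun s t hs ht => ⟨(hx₀ s hs).1, ?_⟩⟩
  have hsum : 0 ≤ ψ t + ψ s := by linarith [(hx₀ s hs).1, (hx₀ t ht).1]
  calc |ψ t - ψ s| * (ψ t + ψ s) = |ψ t * ψ t - ψ s * ψ s| := by
        rw [← abs_of_nonneg hsum, ← abs_mul]; ring_nf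
    _ ≤ η * |Real.log t - Real.log s| :=
        abs_sub_le_mul_abs_log_sub_log hx₀pos (fun t ht => (hψ t ht).mul (hψ t ht)) hderiv_sq hs ht

lemma tendsto_id_div_atTop {S : ℝ → ℝ} (hBS : BojanicSeneta S) (hdiff : Differentiable ℝ S)
    (htop : Tendsto S atTop atTop) : Tendsto (fun x => x / S x) atTop atTop := by
  obtain ⟨x₀, hx₀pos, hx₀⟩ := hBS.exists_abs_log_sub_mul_le hdiff htop one_pos
  have hlog : Tendsto (fun x => Real.log x / 2 + (Real.log x₀ / 2 - Real.log (S x₀)))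
      atTop atTop :=
    tendsto_atTop_add_const_right _ _ (Real.tendsto_log_atTop.atTop_div_const two_pos)
  refine tendsto_atTop_mono' atTop ?_ (Real.tendsto_exp_atTop.comp hlog)
  filter_upwards [eventually_ge_atTop x₀, htop.eventually_gt_atTop 0] with x hx hSx
  obtain ⟨hψx₀, hψ⟩ := hx₀ x₀ x le_rfl hx
  have hψx := (hx₀ x x hx hx).1
  rw [abs_of_nonneg (sub_nonneg.2 (Real.log_le_log hx₀pos hx)), one_mul] at hψ
  have hgrowth : 2 * (Real.log (S x) - Real.log (S x₀)) ≤ Real.log x - Real.log x₀ := by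
    nlinarith [le_abs_self (Real.log (S x) - Real.log (S x₀)),
      abs_nonneg (Real.log (S x) - Real.log (S x₀))]
  calc Real.exp (Real.log x / 2 + (Real.log x₀ / 2 - Real.log (S x₀)))
      ≤ Real.exp (Real.log x - Real.log (S x)) := Real.exp_le_exp.mpr (by linarith)
    _ = x / S x := by rw [Real.exp_sub, Real.exp_log (hx₀pos.trans_le hx), Real.exp_log hSx]

lemma tendsto_atTop_of_mul_div_le {S u : ℝ → ℝ} (hBS : BojanicSeneta S)
    (hdiff : Differentiable ℝ S) (htop : Tendsto S atTop atTop) {c : ℝ} (hc : 0 < c)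
    (hlow : ∀ᶠ x in atTop, c * x / S x ≤ u x) : Tendsto u atTop atTop := by
  refine tendsto_atTop_mono' atTop ?_
    ((tendsto_const_mul_atTop_of_pos hc).mpr (hBS.tendsto_id_div_atTop hdiff htop))
  filter_upwards [hlow] with x hx
  rwa [mul_div_assoc] at hx

lemma tendsto_log_comp_sub_log {S u : ℝ → ℝ} (hBS : BojanicSeneta S)
    (hdiff : Differentiable ℝ S) (htop : Tendsto S atTop atTop) {c₁ c₂ : ℝ} (hc₁ : 0 < c₁)
    (hlow : ∀ᶠ x in atTop, c₁ * x / S x ≤ u x) (hup : ∀ᶠ x in atTop, u x ≤ c₂ * x) :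
    Tendsto (fun x => Real.log (S (u x)) - Real.log (S x)) atTop (𝓝 0) := by
  rw [Metric.tendsto_nhds]
  intro ε hε
  obtain ⟨x₀, hx₀pos, hx₀⟩ := hBS.exists_abs_log_sub_mul_le hdiff htop (half_pos (half_pos hε))
  set K := |Real.log c₁| + |Real.log c₂| with hK_def
  filter_upwards [eventually_ge_atTop x₀,
    (hBS.tendsto_atTop_of_mul_div_le hdiff htop hc₁ hlow).eventually_ge_atTop x₀, hlow, hup,
    (Real.tendsto_log_atTop.comp htop).eventually_ge_atTop K,
    htop.eventually_gt_atTop 0] with x hx hux hlx hux' hK hSx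
  have hxpos : 0 < x := hx₀pos.trans_le hx
  have hupos : 0 < u x := hx₀pos.trans_le hux
  have hc₂ : 0 < c₂ := pos_of_mul_pos_left (hupos.trans_le hux') hxpos.le
  have hK' : K ≤ Real.log (S x) := hK
  -- `log u(x)` is within `log S(x) + K ≤ 2 log S(x)` of `log x`, while the increment of
  -- `(log S)²` over that distance is at most `ε/4` times it
  have hlogu : |Real.log (u x) - Real.log x| ≤ Real.log (S x) + K := by
    have hl := Real.log_le_log (by positivity) hlx
    have hr := Real.log_le_log hupos hux'
    rw [Real.log_div (by positivity) hSx.ne', Real.log_mul hc₁.ne' hxpos.ne'] at hl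
    rw [Real.log_mul hc₂.ne' hxpos.ne'] at hr
    rw [abs_le]
    constructor <;> linarith [hK', hK_def, neg_abs_le (Real.log c₁), le_abs_self (Real.log c₂),
      abs_nonneg (Real.log c₁), abs_nonneg (Real.log c₂)]
  obtain ⟨hψx, hmain⟩ := hx₀ x (u x) hx hux
  have hψu := (hx₀ (u x) x hux hx).1
  rw [dist_zero_right, Real.norm_eq_abs]
  have hsum : 0 < Real.log (S (u x)) + Real.log (S x) := by linarith
  have hbound : |Real.log (S (u x)) - Real.log (S x)| * (Real.log (S (u x)) + Real.log (S x))
      ≤ ε / 2 * (Real.log (S (u x)) + Real.log (S x)) := by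
    nlinarith [hmain, mul_le_mul_of_nonneg_left hlogu (half_pos (half_pos hε)).le]
  linarith [le_of_mul_le_mul_right hbound hsum]

lemma tendsto_comp_div_self {S u : ℝ → ℝ} (hBS : BojanicSeneta S)
    (hdiff : Differentiable ℝ S) (htop : Tendsto S atTop atTop) {c₁ c₂ : ℝ} (hc₁ : 0 < c₁)
    (hlow : ∀ᶠ x in atTop, c₁ * x / S x ≤ u x) (hup : ∀ᶠ x in atTop, u x ≤ c₂ * x) :
    Tendsto (fun x => S (u x) / S x) atTop (𝓝 1) := by
  have hexp := (Real.continuous_exp.tendsto 0).comp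
    (hBS.tendsto_log_comp_sub_log hdiff htop hc₁ hlow hup)
  rw [Real.exp_zero] at hexp
  refine hexp.congr' ?_
  filter_upwards [htop.eventually_gt_atTop 0,
    (hBS.tendsto_atTop_of_mul_div_le hdiff htop hc₁ hlow).eventually (htop.eventually_gt_atTop 0)]
    with x hSx hSu
  rw [Function.comp_apply, Real.exp_sub, Real.exp_log hSu, Real.exp_log hSx]

lemma slowlyVarying {S : ℝ → ℝ} (hBS : BojanicSeneta S) (hdiff : Differentiable ℝ S)
    (htop : Tendsto S atTop atTop) : SlowlyVarying S := by
  intro c hc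
  refine hBS.tendsto_comp_div_self hdiff htop hc ?_ (Eventually.of_forall fun x => le_rfl)
  filter_upwards [htop.eventually_ge_atTop 1, eventually_ge_atTop 0] with x hS hx
  exact div_le_self (by positivity) hS

lemma tendsto_comp_mul_div {S T : ℝ → ℝ} (hBS : BojanicSeneta S) (hdiff : Differentiable ℝ S)
    (htop : Tendsto S atTop atTop) (hT : Tendsto (fun x => T x / S x) atTop (𝓝 1))
    {c : ℝ} (hc : 0 < c) : Tendsto (fun x => S (c * (x / T x)) / S x) atTop (𝓝 1) := by
  have hTS : ∀ᶠ x in atTop, 1 / 2 < T x / S x ∧ T x / S x < 2 :=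
    hT.eventually (Ioo_mem_nhds (by norm_num) (by norm_num))
  refine hBS.tendsto_comp_div_self hdiff htop (c₂ := c) (half_pos hc) ?_ ?_
  · filter_upwards [hTS, htop.eventually_gt_atTop 0, eventually_ge_atTop 0] with x hTx hS hx
    have hTpos : 0 < T x := by
      have := (lt_div_iff₀ hS).mp hTx.1
      linarith
    calc c / 2 * x / S x = c * x / (2 * S x) := by ring
      _ ≤ c * x / T x :=
          div_le_div_of_nonneg_left (by positivity) hTpos ((div_lt_iff₀ hS).mp hTx.2).le
      _ = c * (x / T x) := by ring
  · filter_upwards [hTS, htop.eventually_ge_atTop 2, eventually_ge_atTop 0] with x hTx hS hx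
    have hT1 : 1 ≤ T x := by
      have := (lt_div_iff₀ (by linarith)).mp hTx.1
      linarith
    exact mul_le_mul_of_nonneg_left (div_le_self hx hT1) hc.le

lemma tendsto_anticlustering_exponent {S T : ℝ → ℝ} (hBS : BojanicSeneta S)
    (hdiff : Differentiable ℝ S) (htop : Tendsto S atTop atTop)
    (hT : Tendsto (fun x => T x / S x) atTop (𝓝 1)) {a b ε : ℝ} (ha : 0 < a) (hb : 0 < b)
    (hε : 0 < ε) (C : ℝ) :
    Tendsto (fun x => (S (ε * (x / T x) / b) + S (ε * x / b) - S (x / a) - 2 * Real.log C) / S x)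
      atTop (𝓝 1) := by
  have hslow := hBS.slowlyVarying hdiff htop
  have h₁ : Tendsto (fun x => S (ε * (x / T x) / b) / S x) atTop (𝓝 1) := by
    simpa only [mul_div_right_comm] using hBS.tendsto_comp_mul_div hdiff htop hT (div_pos hε hb)
  have h₂ : Tendsto (fun x => S (ε * x / b) / S x) atTop (𝓝 1) := by
    simpa only [mul_div_right_comm] using hslow _ (div_pos hε hb)
  have h₃ : Tendsto (fun x => S (x / a) / S x) atTop (𝓝 1) := by
    simpa only [div_eq_inv_mul] using hslow _ (inv_pos.mpr ha)
  have h₄ : Tendsto (fun x => 2 * Real.log C / S x) atTop (𝓝 0) :=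
    tendsto_const_nhds.div_atTop htop
  have hsum := ((h₁.add h₂).sub h₃).sub h₄
  norm_num at hsum
  refine hsum.congr fun x => ?_
  simp only [add_div, sub_div]

end BojanicSeneta

lemma SlowlyVarying.tendsto_div_of_le_of_le {L T : ℝ → ℝ} (hL : SlowlyVarying L) {a b : ℝ}
    (ha : 0 < a) (hb : 0 < b) (hpos : ∀ᶠ x in atTop, 0 < L x)
    (hlow : ∀ᶠ x in atTop, L (x / b) ≤ T x) (hup : ∀ᶠ x in atTop, T x ≤ L (x / a)) :
    Tendsto (fun x => T x / L x) atTop (𝓝 1) := by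
  have hdiv : ∀ c, 0 < c → Tendsto (fun x => L (x / c) / L x) atTop (𝓝 1) := fun c hc => by
    simpa only [div_eq_inv_mul] using hL c⁻¹ (inv_pos.mpr hc)
  refine tendsto_of_tendsto_of_tendsto_of_le_of_le' (hdiv b hb) (hdiv a ha) ?_ ?_
  · filter_upwards [hpos, hlow] with x hx h
    exact div_le_div_of_nonneg_right h hx.le
  · filter_upwards [hpos, hup] with x hx h
    exact div_le_div_of_nonneg_right h hx.le

lemma exists_le_exp_neg_mul_and_tendsto_zero {f S T : ℝ → ℝ} (hS : Tendsto S atTop atTop)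
    (hT : Tendsto (fun x => T x / S x) atTop (𝓝 1)) (hf₀ : ∀ᶠ x in atTop, 0 ≤ f x)
    (hfT : ∀ᶠ x in atTop, f x ≤ Real.exp (-T x)) :
    (∃ e : ℝ → ℝ, Tendsto e atTop (𝓝 0) ∧
      ∀ᶠ x in atTop, f x ≤ Real.exp (-(S x) * (1 + e x))) ∧ Tendsto f atTop (𝓝 0) := by
  have hTeq : ∀ᶠ x in atTop, T x / S x * S x = T x := by
    filter_upwards [hS.eventually_gt_atTop 0] with x hx
    exact div_mul_cancel₀ _ hx.ne'
  refine ⟨⟨fun x => T x / S x - 1, by simpa using hT.sub_const 1, ?_⟩, ?_⟩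
  · filter_upwards [hfT, hTeq] with x hx heq
    rwa [show -(S x) * (1 + (T x / S x - 1)) = -(T x / S x * S x) by ring, heq]
  · have hTtop : Tendsto T atTop atTop :=
      (hT.pos_mul_atTop one_pos hS).congr' hTeq
    exact squeeze_zero' hf₀ hfT (Real.tendsto_exp_neg_atTop_nhds_zero.comp hTtop)

lemma tail_nonneg (Z : Ω → ℝ) (x : ℝ) : 0 ≤ tail Z x := ENNReal.toReal_nonneg

lemma atail_nonneg (Z : Ω → ℝ) (x : ℝ) : 0 ≤ atail Z x := ENNReal.toReal_nonneg

lemma Stationary.map_eq_map_zero {X : ℕ → Ω → ℝ} (hX : Stationary X)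
    (hmeas : ∀ i, Measurable (X i)) (i : ℕ) :
    Measure.map (X i) ℙ = Measure.map (X 0) ℙ := by
  have h := congrArg (Measure.map fun f : Fin 1 → ℝ => f 0) (hX i 1)
  rw [Measure.map_map (measurable_pi_apply 0) (measurable_pi_lambda _ fun _ => hmeas _),
    Measure.map_map (measurable_pi_apply 0) (measurable_pi_lambda _ fun _ => hmeas _)] at h
  simpa [Function.comp_def] using h

lemma Stationary.ae_mem {X : ℕ → Ω → ℝ} (hX : Stationary X) (hmeas : ∀ i, Measurable (X i))
    {s : Set ℝ} (hs : MeasurableSet s) (h₀ : ∀ᵐ ω, X 0 ω ∈ s) (i : ℕ) : ∀ᵐ ω, X i ω ∈ s := by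
  have h := (ae_map_iff (p := (· ∈ s)) (hmeas 0).aemeasurable hs).mpr h₀
  rw [← hX.map_eq_map_zero hmeas i] at h
  exact (ae_map_iff (p := (· ∈ s)) (hmeas i).aemeasurable hs).mp h

lemma tendsto_tail_atTop [IsFiniteMeasure (ℙ : Measure Ω)] {Z : Ω → ℝ} (hZ : Measurable Z) :
    Tendsto (tail Z) atTop (𝓝 0) := by
  have h := tendsto_measure_iInter_atTop (μ := ℙ) (s := fun x : ℝ => {ω | x < Z ω})
    (fun _ => (measurableSet_lt measurable_const hZ).nullMeasurableSet)
    (fun _ _ hxy _ hω => hxy.trans_lt hω) ⟨0, measure_ne_top _ _⟩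
  have hempty : (⋂ x : ℝ, {ω | x < Z ω}) = ∅ :=
    eq_empty_of_forall_notMem fun ω hω => lt_irrefl (Z ω) (mem_iInter.mp hω (Z ω))
  rw [hempty, measure_empty] at h
  have h' := (ENNReal.tendsto_toReal ENNReal.zero_ne_top).comp h
  rwa [ENNReal.toReal_zero] at h'

lemma tendsto_atTop_of_tail_eq_exp_neg [IsFiniteMeasure (ℙ : Measure Ω)] {Z : Ω → ℝ}
    (hZ : Measurable Z) {S : ℝ → ℝ} (h : ∀ x, tail Z x = Real.exp (-S x)) :
    Tendsto S atTop atTop := by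
  have hexp : Tendsto (fun x => Real.exp (-S x)) atTop (𝓝[>] 0) :=
    tendsto_nhdsWithin_iff.mpr
      ⟨(tendsto_tail_atTop hZ).congr h, .of_forall fun x => Real.exp_pos _⟩
  simpa [Function.comp_def] using
    tendsto_neg_atBot_atTop.comp (Real.tendsto_log_nhdsGT_zero.comp hexp)

lemma tail_div_le_tail_mul [IsFiniteMeasure (ℙ : Measure Ω)] {σ Y : Ω → ℝ} {a x : ℝ}
    (ha : 0 < a) (hσ : ∀ᵐ ω, a ≤ σ ω) (hx : 0 ≤ x) :
    tail Y (x / a) ≤ tail (fun ω => σ ω * Y ω) x := by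
  refine ENNReal.toReal_mono (measure_ne_top _ _) (measure_mono_ae ?_)
  filter_upwards [hσ] with ω hσω hω
  have hY : x / a < Y ω := hω
  have hY₀ : 0 ≤ Y ω := (div_nonneg hx ha.le).trans hY.le
  show x < σ ω * Y ω
  rw [div_lt_iff₀ ha] at hY
  nlinarith [mul_nonneg hY₀ (sub_nonneg.2 hσω)]

lemma tail_mul_le_tail_div [IsFiniteMeasure (ℙ : Measure Ω)] {σ Y : Ω → ℝ} {b x : ℝ}
    (hb : 0 < b) (hσ : ∀ᵐ ω, 0 ≤ σ ω ∧ σ ω ≤ b) (hx : 0 ≤ x) :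
    tail (fun ω => σ ω * Y ω) x ≤ tail Y (x / b) := by
  refine ENNReal.toReal_mono (measure_ne_top _ _) (measure_mono_ae ?_)
  filter_upwards [hσ] with ω hσω hω
  have hX : x < σ ω * Y ω := hω
  have hY : 0 < Y ω := by
    by_contra! hY
    linarith [mul_nonpos_of_nonneg_of_nonpos hσω.1 hY]
  show x / b < Y ω
  rw [div_lt_iff₀ hb]
  nlinarith [mul_le_mul_of_nonneg_right hσω.2 hY.le]

lemma div_lt_abs_of_lt_abs_mul {s y r b : ℝ} (hb : 0 < b) (hs : 0 ≤ s ∧ s ≤ b)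
    (h : r < |s * y|) : r / b < |y| := by
  rw [div_lt_iff₀ hb]
  rw [abs_mul, abs_of_nonneg hs.1] at h
  nlinarith [mul_le_mul_of_nonneg_right hs.2 (abs_nonneg y)]

lemma pr_lt_abs_mul_and_lt_abs_mul_le [IsFiniteMeasure (ℙ : Measure Ω)]
    {σ τ U V : Ω → ℝ} (hUV : IndepFun U V ℙ) {b : ℝ} (hb : 0 < b)
    (hσ : ∀ᵐ ω, 0 ≤ σ ω ∧ σ ω ≤ b) (hτ : ∀ᵐ ω, 0 ≤ τ ω ∧ τ ω ≤ b) (r s : ℝ) :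
    pr {ω | r < |σ ω * U ω| ∧ s < |τ ω * V ω|} ≤ atail U (r / b) * atail V (s / b) := by
  have hmeas : ∀ c : ℝ, MeasurableSet {y : ℝ | c < |y|} := fun c =>
    measurableSet_lt measurable_const measurable_abs
  calc pr {ω | r < |σ ω * U ω| ∧ s < |τ ω * V ω|}
      ≤ (ℙ (U ⁻¹' {y | r / b < |y|} ∩ V ⁻¹' {y | s / b < |y|})).toReal := by
        refine ENNReal.toReal_mono (measure_ne_top _ _) (measure_mono_ae ?_)
        filter_upwards [hσ, hτ] with ω hσω hτω hω
        exact ⟨div_lt_abs_of_lt_abs_mul hb hσω hω.1, div_lt_abs_of_lt_abs_mul hb hτω hω.2⟩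
    _ = atail U (r / b) * atail V (s / b) := by
        rw [hUV.measure_inter_preimage_eq_mul _ _ (hmeas _) (hmeas _), ENNReal.toReal_mul]
        rfl

lemma atail_eq_of_map_eq {U V : Ω → ℝ} (hU : Measurable U) (hV : Measurable V)
    (h : Measure.map U ℙ = Measure.map V ℙ) : atail U = atail V := by
  funext x
  exact congrArg ENNReal.toReal (IdentDistrib.measure_mem_eq
    ⟨hU.aemeasurable, hV.aemeasurable, h⟩ (measurableSet_lt measurable_const measurable_abs))

lemma TailBalance.exists_atail_le_mul_tail [IsProbabilityMeasure (ℙ : Measure Ω)]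
    {Z : Ω → ℝ} {pp pm : ℝ} (h : TailBalance Z pp pm) :
    ∃ C, 0 < C ∧ ∀ x, atail Z x ≤ C * tail Z x := by
  obtain ⟨x₀, hx₀⟩ := eventually_atTop.mp (h.plus.eventually (lt_mem_nhds (half_lt_self h.pos)))
  have htail_anti : Antitone (tail Z) := fun x y hxy =>
    ENNReal.toReal_mono (measure_ne_top _ _) (measure_mono fun ω hω => hxy.trans_lt hω)
  have htail₀ : 0 < tail Z x₀ := by
    have hratio := (half_pos h.pos).trans (hx₀ x₀ le_rfl)
    refine (tail_nonneg Z x₀).lt_of_ne fun h0 => ?_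
    rw [← h0, zero_div] at hratio
    exact lt_irrefl 0 hratio
  refine ⟨max (2 / pp) (tail Z x₀)⁻¹, by positivity, fun x => ?_⟩
  rcases le_total x₀ x with hx | hx
  · rcases (atail_nonneg Z x).eq_or_lt with h0 | hpos
    · rw [← h0]
      exact mul_nonneg (by positivity) (tail_nonneg Z x)
    · have hratio := hx₀ x hx
      rw [lt_div_iff₀ hpos] at hratio
      calc atail Z x ≤ 2 / pp * tail Z x := by
            rw [div_mul_eq_mul_div, le_div_iff₀ h.pos]
            linarith
        _ ≤ _ := mul_le_mul_of_nonneg_right (le_max_left _ _) (tail_nonneg Z x)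
  · calc atail Z x ≤ 1 := measureReal_le_one
      _ = (tail Z x₀)⁻¹ * tail Z x₀ := (inv_mul_cancel₀ htail₀.ne').symm
      _ ≤ _ := mul_le_mul (le_max_right _ _) (htail_anti hx) htail₀.le (by positivity)

lemma neg_log_tail_mul_mem_Icc [IsFiniteMeasure (ℙ : Measure Ω)] {σ Y : Ω → ℝ} {S : ℝ → ℝ}
    {a b x : ℝ} (ha : 0 < a) (hb : 0 < b) (hσ : ∀ᵐ ω, a ≤ σ ω ∧ σ ω ≤ b)
    (hY : ∀ x, tail Y x = Real.exp (-S x)) (hx : 0 ≤ x) :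
    -Real.log (tail (fun ω => σ ω * Y ω) x) ∈ Icc (S (x / b)) (S (x / a)) := by
  have hlow : Real.exp (-S (x / a)) ≤ tail (fun ω => σ ω * Y ω) x :=
    hY (x / a) ▸ tail_div_le_tail_mul ha (hσ.mono fun _ h => h.1) hx
  have hup : tail (fun ω => σ ω * Y ω) x ≤ Real.exp (-S (x / b)) :=
    hY (x / b) ▸ tail_mul_le_tail_div hb (hσ.mono fun _ h => ⟨ha.le.trans h.1, h.2⟩) hx
  have hup' := Real.log_le_log ((Real.exp_pos _).trans_le hlow) hup
  have hlow' := Real.log_le_log (Real.exp_pos _) hlow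
  rw [Real.log_exp] at hup' hlow'
  constructor <;> linarith

lemma pr_lt_abs_and_lt_abs_div_tail_le [IsFiniteMeasure (ℙ : Measure Ω)]
    {σ Y : ℕ → Ω → ℝ} {S : ℝ → ℝ} {a b C : ℝ} (ha : 0 < a) (hb : 0 < b) (hC : 0 < C)
    (hσ : ∀ i, ∀ᵐ ω, a ≤ σ i ω ∧ σ i ω ≤ b) (hYmeas : ∀ i, Measurable (Y i)) (hY : IID Y)
    (hYtail : ∀ x, tail (Y 0) x = Real.exp (-S x))
    (hCY : ∀ x, atail (Y 0) x ≤ C * tail (Y 0) x) {h : ℕ} (hh : h ≠ 0) (r s : ℝ) {x : ℝ}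
    (hx : 0 ≤ x) :
    pr {ω | r < |σ 0 ω * Y 0 ω| ∧ s < |σ h ω * Y h ω|} / tail (fun ω => σ 0 ω * Y 0 ω) x ≤
      Real.exp (-(S (r / b) + S (s / b) - S (x / a) - 2 * Real.log C)) := by
  have hσ' : ∀ i, ∀ᵐ ω, 0 ≤ σ i ω ∧ σ i ω ≤ b := fun i =>
    (hσ i).mono fun _ hω => ⟨ha.le.trans hω.1, hω.2⟩
  have hnum := pr_lt_abs_mul_and_lt_abs_mul_le (hY.1.indepFun hh.symm) hb (hσ' 0) (hσ' h) r s
  rw [atail_eq_of_map_eq (hYmeas h) (hYmeas 0) (hY.2 h)] at hnum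
  have hCY' : ∀ v, atail (Y 0) v ≤ C * Real.exp (-S v) := fun v => hYtail v ▸ hCY v
  have hden : Real.exp (-S (x / a)) ≤ tail (fun ω => σ 0 ω * Y 0 ω) x :=
    hYtail (x / a) ▸ tail_div_le_tail_mul ha ((hσ 0).mono fun _ hω => hω.1) hx
  calc pr {ω | r < |σ 0 ω * Y 0 ω| ∧ s < |σ h ω * Y h ω|} / tail (fun ω => σ 0 ω * Y 0 ω) x
      ≤ C * Real.exp (-S (r / b)) * (C * Real.exp (-S (s / b))) / Real.exp (-S (x / a)) :=
        div_le_div₀ (by positivity) (hnum.trans (mul_le_mul (hCY' _) (hCY' _)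
          (atail_nonneg _ _) (by positivity))) (Real.exp_pos _) hden
    _ = Real.exp (-(S (r / b) + S (s / b) - S (x / a) - 2 * Real.log C)) := by
        rw [show -(S (r / b) + S (s / b) - S (x / a) - 2 * Real.log C) =
            -S (r / b) + -S (s / b) - -S (x / a) + (Real.log C + Real.log C) by ring,
          Real.exp_add, Real.exp_sub, Real.exp_add, Real.exp_add, Real.exp_log hC]
        ring

lemma indep_sup_sup {Ω' : Type*} {m₀ : MeasurableSpace Ω'} {μ : Measure Ω'}
    [IsZeroOrProbabilityMeasure μ] {A₁ A₂ B₁ B₂ : MeasurableSpace Ω'}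
    (hA₁ : A₁ ≤ m₀) (hA₂ : A₂ ≤ m₀) (hB₁ : B₁ ≤ m₀) (hB₂ : B₂ ≤ m₀)
    (hA : Indep A₁ A₂ μ) (hB : Indep B₁ B₂ μ) (hAB : Indep (A₁ ⊔ A₂) (B₁ ⊔ B₂) μ) :
    Indep (A₁ ⊔ B₁) (A₂ ⊔ B₂) μ := by
  -- `A ⊔ B` is generated by the π-system of intersections `u ∩ v`, `u ∈ A`, `v ∈ B`
  let p : MeasurableSpace Ω' → MeasurableSpace Ω' → Set (Set Ω') :=
    fun mA mB => {s | ∃ u v, MeasurableSet[mA] u ∧ MeasurableSet[mB] v ∧ s = u ∩ v}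
  have hgen : ∀ mA mB, mA ⊔ mB = MeasurableSpace.generateFrom (p mA mB) := by
    intro mA mB
    refine le_antisymm (sup_le ?_ ?_) (MeasurableSpace.generateFrom_le ?_)
    · exact fun s hs => MeasurableSpace.measurableSet_generateFrom
        ⟨s, univ, hs, MeasurableSet.univ, (inter_univ s).symm⟩
    · exact fun s hs => MeasurableSpace.measurableSet_generateFrom
        ⟨univ, s, MeasurableSet.univ, hs, (univ_inter s).symm⟩
    · rintro s ⟨u, v, hu, hv, rfl⟩
      exact (le_sup_left (b := mB) u hu).inter (le_sup_right (a := mA) v hv)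
  have hpi : ∀ mA mB, IsPiSystem (p mA mB) := by
    rintro mA mB _ ⟨u, v, hu, hv, rfl⟩ _ ⟨u', v', hu', hv', rfl⟩ -
    exact ⟨u ∩ u', v ∩ v', hu.inter hu', hv.inter hv', inter_inter_inter_comm u v u' v'⟩
  have hAB' := (Indep_iff _ _ _).mp hAB
  refine IndepSets.indep (sup_le hA₁ hB₁) (sup_le hA₂ hB₂) (hpi A₁ B₁) (hpi A₂ B₂)
    (hgen A₁ B₁) (hgen A₂ B₂) ?_
  rw [IndepSets_iff]
  rintro _ _ ⟨u, v, hu, hv, rfl⟩ ⟨u', v', hu', hv', rfl⟩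
  rw [inter_inter_inter_comm,
    hAB' _ _ ((le_sup_left (b := A₂) _ hu).inter (le_sup_right (a := A₁) _ hu'))
      ((le_sup_left (b := B₂) _ hv).inter (le_sup_right (a := B₁) _ hv')),
    (Indep_iff _ _ _).mp hA _ _ hu hu', (Indep_iff _ _ _).mp hB _ _ hv hv',
    hAB' _ _ (le_sup_left (b := A₂) _ hu) (le_sup_left (b := B₂) _ hv),
    hAB' _ _ (le_sup_right (a := A₁) _ hu') (le_sup_right (a := B₁) _ hv')]
  ring

lemma comap_le_comap_pi {α ι β : Type*} [MeasurableSpace β] (Z : ι → α → β) (s : ι) :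
    MeasurableSpace.comap (Z s) inferInstance ≤
      MeasurableSpace.comap (fun ω i => Z i ω) inferInstance :=
  ((measurable_pi_apply s).comp (comap_measurable fun ω i => Z i ω)).comap_le

lemma comap_mul_le {α : Type*} (f g : α → ℝ) :
    MeasurableSpace.comap (fun ω => f ω * g ω) inferInstance ≤
      MeasurableSpace.comap f inferInstance ⊔ MeasurableSpace.comap g inferInstance := by
  rw [← MeasurableSpace.comap_prodMk]
  exact (measurable_mul : Measurable fun p : ℝ × ℝ => p.1 * p.2).comp
    (comap_measurable fun ω => (f ω, g ω)) |>.comap_le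

lemma MDep.mul [IsZeroOrProbabilityMeasure (ℙ : Measure Ω)] {σ Y : ℕ → Ω → ℝ} {m : ℕ}
    (hσ : MDep σ m) (hσmeas : ∀ i, Measurable (σ i)) (hYmeas : ∀ i, Measurable (Y i))
    (hY : iIndepFun Y ℙ)
    (hσY : IndepFun (fun ω i => σ i ω) (fun ω i => Y i ω) ℙ) :
    MDep (fun i ω => σ i ω * Y i ω) m := by
  intro t h hth
  let F : (ℕ → Ω → ℝ) → Set ℕ → MeasurableSpace Ω := fun Z I =>
    ⨆ s ∈ I, MeasurableSpace.comap (Z s) inferInstance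
  have hF_mul : ∀ I, F (fun i ω => σ i ω * Y i ω) I ≤ F σ I ⊔ F Y I := fun I =>
    iSup₂_le fun s hs => (comap_mul_le _ _).trans <| sup_le_sup
      (le_iSup₂ (f := fun s _ => MeasurableSpace.comap (σ s) inferInstance) s hs)
      (le_iSup₂ (f := fun s _ => MeasurableSpace.comap (Y s) inferInstance) s hs)
  have hF_pi : ∀ Z I, F Z I ≤ MeasurableSpace.comap (fun ω i => Z i ω) inferInstance :=
    fun Z _ => iSup₂_le fun s _ => comap_le_comap_pi Z s
  have hF_meas : ∀ Z : ℕ → Ω → ℝ, (∀ i, Measurable (Z i)) →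
      ∀ I, F Z I ≤ (inferInstance : MeasurableSpace Ω) :=
    fun Z hZ _ => iSup₂_le fun s _ => (hZ s).comap_le
  have hY_past_future : Indep (F Y (Iic t)) (F Y (Ici (t + h))) ℙ := by
    refine indep_of_indep_of_le_right (indep_biSup_compl (fun n => (hYmeas n).comap_le)
      ((iIndepFun_iff_iIndep _ _ _).mp hY) (Iic t)) (biSup_mono fun s hs => ?_)
    simp only [mem_Ici, mem_compl_iff, mem_Iic, not_le] at hs ⊢
    omega
  have hσ_Y : Indep (F σ (Iic t) ⊔ F σ (Ici (t + h))) (F Y (Iic t) ⊔ F Y (Ici (t + h))) ℙ :=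
    indep_of_indep_of_le_left (indep_of_indep_of_le_right ((IndepFun_iff_Indep _ _ _).mp hσY)
      (sup_le (hF_pi _ _) (hF_pi _ _))) (sup_le (hF_pi _ _) (hF_pi _ _))
  exact indep_of_indep_of_le_left (indep_of_indep_of_le_right
    (indep_sup_sup (hF_meas σ hσmeas _) (hF_meas σ hσmeas _) (hF_meas Y hYmeas _)
      (hF_meas Y hYmeas _) (hσ t h hth) hY_past_future hσ_Y)
    (hF_mul _)) (hF_mul _)

theorem statement14_general
    {Ω : Type*} [MeasureSpace Ω] [IsProbabilityMeasure (ℙ : Measure Ω)]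
    (σv : ℕ → Ω → ℝ) (Y : ℕ → Ω → ℝ)
    (hσmeas : ∀ i, Measurable (σv i)) (hYmeas : ∀ i, Measurable (Y i))
    (hσstat : Stationary σv)
    (m : ℕ) (hσdep : MDep σv m)
    (a b : ℝ) (ha : 0 < a) (hb : 1 < b)
    (hbound : ∀ᵐ ω ∂ℙ, a ≤ σv 0 ω ∧ σv 0 ω ≤ b)
    (hYiid : IID Y)
    (hindep : IndepFun (fun ω => fun i => σv i ω) (fun ω => fun i => Y i ω) ℙ)
    (S_Y : ℝ → ℝ) (hYtail : ∀ x : ℝ, tail (Y 0) x = Real.exp (-S_Y x))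
    (pp pm : ℝ) (hYS : ClassS (Y 0) pp pm)
    (hS_Y_diff : Differentiable ℝ S_Y)
    (hBS : Tendsto (fun x => x * deriv S_Y x / S_Y x * Real.log (S_Y x))
      atTop (𝓝 0))
    (X : ℕ → Ω → ℝ) (hX : ∀ i ω, X i ω = σv i ω * Y i ω) :
    -- `S(x) = S_Y(x)(1 + o(1))`
    Tendsto (fun x => (-Real.log (tail (X 0) x)) / S_Y x) atTop (𝓝 1) ∧
    -- `(X_i)` is `m`-dependent
    MDep X m ∧
    -- condition C3 holds, with the bound `exp(-S_Y(x)(1+o(1)))`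
    (∀ ε : ℝ, 0 < ε → ∀ h : ℕ, 1 ≤ h → h ≤ m →
      (∃ e : ℝ → ℝ, Tendsto e atTop (𝓝 0) ∧ ∀ᶠ x in atTop,
        pr {ω | ε * (x / (-Real.log (tail (X 0) x))) < |X 0 ω| ∧ ε * x < |X h ω|}
            / tail (X 0) x
          ≤ Real.exp (-(S_Y x) * (1 + e x))) ∧
      Tendsto (fun x =>
        pr {ω | ε * (x / (-Real.log (tail (X 0) x))) < |X 0 ω| ∧ ε * x < |X h ω|}
          / tail (X 0) x) atTop (𝓝 0)) := by
  obtain rfl : X = fun i ω => σv i ω * Y i ω := funext fun i => funext (hX i)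
  have hb₀ : 0 < b := one_pos.trans hb
  have hσ : ∀ i, ∀ᵐ ω, a ≤ σv i ω ∧ σv i ω ≤ b :=
    hσstat.ae_mem hσmeas measurableSet_Icc hbound
  have hSY : Tendsto S_Y atTop atTop := tendsto_atTop_of_tail_eq_exp_neg (hYmeas 0) hYtail
  have hS : Tendsto (fun x => -Real.log (tail (fun ω => σv 0 ω * Y 0 ω) x) / S_Y x)
      atTop (𝓝 1) := by
    have hmem := (eventually_ge_atTop 0).mono fun x hx =>
      neg_log_tail_mul_mem_Icc ha hb₀ (hσ 0) hYtail hx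
    exact (BojanicSeneta.slowlyVarying hBS hS_Y_diff hSY).tendsto_div_of_le_of_le ha hb₀
      (hSY.eventually_gt_atTop 0) (hmem.mono fun _ h => h.1) (hmem.mono fun _ h => h.2)
  obtain ⟨C, hC, hCY⟩ := hYS.2.exists_atail_le_mul_tail
  refine ⟨hS, hσdep.mul hσmeas hYmeas hYiid.1 hindep, fun ε hε h h1 _ => ?_⟩
  refine exists_le_exp_neg_mul_and_tendsto_zero hSY
    (BojanicSeneta.tendsto_anticlustering_exponent hBS hS_Y_diff hSY hS ha hb₀ hε C) ?_ ?_
  · exact .of_forall fun x => div_nonneg measureReal_nonneg (tail_nonneg _ _)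
  · filter_upwards [eventually_ge_atTop 0] with x hx
    exact pr_lt_abs_and_lt_abs_div_tail_le ha hb₀ hC hσ hYmeas hYiid hYtail hCY (by omega) _ _ hx

/-- **Example 2.6** (stochastic volatility with bounded volatility).
For `X_i = σ_i Y_i` with bounded stationary `m`-dependent `(σ_i)` independent of
iid `(Y_i)`, `F_Y ∈ MDA(Λ) ∩ 𝒮` with `F̄_Y = exp(-S_Y)` satisfying the
Bojanic–Seneta condition, and `F` of `X` subexponential:
`S(x) = S_Y(x)(1+o(1))` and condition `C3` holds for `g(x) = x/S(x)`. -/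
theorem statement14
    {Ω : Type*} [MeasureSpace Ω] [IsProbabilityMeasure (ℙ : Measure Ω)]
    (σv : ℕ → Ω → ℝ) (Y : ℕ → Ω → ℝ)
    (hσmeas : ∀ i, Measurable (σv i)) (hYmeas : ∀ i, Measurable (Y i))
    (hσstat : Stationary σv)
    (m : ℕ) (hm : 1 ≤ m) (hσdep : MDep σv m)
    (a b : ℝ) (ha : 0 < a) (ha1 : a < 1) (hb : 1 < b)
    (hbound : ∀ᵐ ω ∂ℙ, a ≤ σv 0 ω ∧ σv 0 ω ≤ b)
    (hYiid : IID Y)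
    (hindep : IndepFun (fun ω => fun i => σv i ω) (fun ω => fun i => Y i ω) ℙ)
    (S_Y : ℝ → ℝ) (hYtail : ∀ x : ℝ, tail (Y 0) x = Real.exp (-S_Y x))
    (pp pm : ℝ) (hYS : ClassS (Y 0) pp pm) (hYMDA : GumbelMDA (Y 0))
    (hS_Y_diff : Differentiable ℝ S_Y)
    (hBS : Tendsto (fun x => x * deriv S_Y x / S_Y x * Real.log (S_Y x))
      atTop (𝓝 0))
    (X : ℕ → Ω → ℝ) (hX : ∀ i ω, X i ω = σv i ω * Y i ω)
    -- assume the distribution of `X` is subexponential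
    (hXsub : SubexponentialMeasure (Measure.map (fun ω => max (X 0 ω) 0) ℙ))
    -- `g(x) = x/S(x)` is assumed to be (eventually) increasing
    (hg_mono : ∃ x₀ : ℝ,
      MonotoneOn (fun x => x / (-Real.log (tail (X 0) x))) (Set.Ici x₀)) :
    -- `S(x) = S_Y(x)(1 + o(1))`
    Tendsto (fun x => (-Real.log (tail (X 0) x)) / S_Y x) atTop (𝓝 1) ∧
    -- `(X_i)` is `m`-dependent
    MDep X m ∧
    -- condition C3 holds, with the bound `exp(-S_Y(x)(1+o(1)))`
    (∀ ε : ℝ, 0 < ε → ∀ h : ℕ, 1 ≤ h → h ≤ m →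
      (∃ e : ℝ → ℝ, Tendsto e atTop (𝓝 0) ∧ ∀ᶠ x in atTop,
        pr {ω | ε * (x / (-Real.log (tail (X 0) x))) < |X 0 ω| ∧ ε * x < |X h ω|}
            / tail (X 0) x
          ≤ Real.exp (-(S_Y x) * (1 + e x))) ∧
      Tendsto (fun x =>
        pr {ω | ε * (x / (-Real.log (tail (X 0) x))) < |X 0 ω| ∧ ε * x < |X h ω|}
          / tail (X 0) x) atTop (𝓝 0)) :=
  statement14_general σv Y hσmeas hYmeas hσstat m hσdep a b ha hb hbound hYiid hindep S_Y hYtail pp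
    pm hYS hS_Y_diff hBS X hX

end PLD
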